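/- Let A = ↓a and B = ↓b be summand-ideals of the pseudo MV-algebra M = Γ(G,u), where a and b are Boolean elements. Then ⟨A ∪ B⟩_n = ↓(a ⊕ b) and A ∩ B = ↓(a ⊙ b), and both are summand-ideals of M; moreover the map a ↦ ↓a is a bijection from the set of Boolean elements of M onto the set of summand-ideals of M satisfying a ≤ b if and only if ↓a ⊆ ↓b. -/

import Mathlib

variable {G : Type*} [Lattice G] [AddGroup G]
  [CovariantClass G G (· + ·) (· ≤ ·)]
  [CovariantClass G G (Function.swap (· + ·)) (· ≤ ·)]

/-- `u` is a strong unit of the lattice-ordered group `G`. -/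
def IsStrongUnit (u : G) : Prop := 0 ≤ u ∧ ∀ x : G, ∃ n : ℕ, x ≤ n • u

/-- The operation `x ⊕ y := (x + y) ⊓ u` of the pseudo MV-algebra `Γ(G,u)`. -/
def oplus (u x y : G) : G := (x + y) ⊓ u

/-- The operation `x ⊙ y := (x - u + y) ⊔ 0` of the pseudo MV-algebra `Γ(G,u)`. -/
def odot (u x y : G) : G := (x - u + y) ⊔ 0

/-- `n.x := x ⊕ ⋯ ⊕ x` (`n` summands), with `0.x = 0`. -/
def nOplus (u : G) : ℕ → G → G
  | 0, _ => 0
  | n + 1, x => oplus u (nOplus u n x) x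

/-- `I` is an ideal of the pseudo MV-algebra with carrier `C ⊆ Γ(G,u)`:
a nonempty subset of `C`, downward closed within `C`, and closed under `⊕`. -/
def IsIdealIn (u : G) (C I : Set G) : Prop :=
  I ⊆ C ∧ I.Nonempty ∧ (∀ x ∈ I, ∀ y ∈ C, y ≤ x → y ∈ I) ∧
    ∀ x ∈ I, ∀ y ∈ I, oplus u x y ∈ I

/-- `I` is a normal ideal: `x ⊕ I = I ⊕ x` for all `x ∈ C`. -/
def IsNormalIdealIn (u : G) (C I : Set G) : Prop :=
  IsIdealIn u C I ∧ ∀ x ∈ C, (fun i => oplus u x i) '' I = (fun i => oplus u i x) '' I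

/-- `⟨X⟩_n`, the smallest normal ideal (of the carrier `C`) containing `X`. -/
def normalGenIn (u : G) (C X : Set G) : Set G :=
  ⋂₀ {I | IsNormalIdealIn u C I ∧ X ⊆ I}

/-- The polar `X^⊥ = {y ∈ C : y ∧ x = 0 for all x ∈ X}` computed in carrier `C`. -/
def polarIn (C X : Set G) : Set G := {y ∈ C | ∀ x ∈ X, y ⊓ x = 0}

/-- `A ⊕ B := {a ⊕ b : a ∈ A, b ∈ B}`. -/
def setOplus (u : G) (A B : Set G) : Set G := Set.image2 (oplus u) A B

/-- `↓a` computed within the carrier `C`. -/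
def dsetIn (C : Set G) (a : G) : Set G := {x ∈ C | x ≤ a}

/-- `I` is a summand-ideal of the carrier `C`: a normal ideal such that for
some normal ideal `J`, `I ∩ J = {0}` and `⟨I ∪ J⟩_n = C`. -/
def IsSummandIdealIn (u : G) (C I : Set G) : Prop :=
  IsNormalIdealIn u C I ∧ ∃ J, IsNormalIdealIn u C J ∧ I ∩ J = {0} ∧
    normalGenIn u C (I ∪ J) = C

/-- `I` is a polar ideal of the carrier `C`: `I = I^⊥⊥`. -/
def IsPolarIdealIn (C I : Set G) : Prop := polarIn C (polarIn C I) = I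

/-- `a` is a Boolean element of the carrier `C`: `a ∈ C` and `a ⊕ a = a`. -/
def IsBooleanIn (u : G) (C : Set G) (a : G) : Prop := a ∈ C ∧ oplus u a a = a

/-- The carrier `C` is strongly projectable: every polar ideal is a summand-ideal. -/
def IsStronglyProjectableIn (u : G) (C : Set G) : Prop :=
  ∀ I : Set G, IsPolarIdealIn C I → IsSummandIdealIn u C I

/-- `N` is a subalgebra of `Γ(G,u)`: contains `0` and `u`, closed under `⊕`,
`x⁻ = u - x` and `x∼ = -x + u`. -/
def IsSubalg (u : G) (N : Set G) : Prop :=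
  N ⊆ Set.Icc 0 u ∧ 0 ∈ N ∧ u ∈ N ∧
    (∀ x ∈ N, ∀ y ∈ N, oplus u x y ∈ N) ∧
    (∀ x ∈ N, u - x ∈ N) ∧ (∀ x ∈ N, -x + u ∈ N)

/-- `N` is a large subalgebra of `Γ(G,u)`: for every nonzero `y ∈ Γ(G,u)` there
are `n ∈ ℕ` and a nonzero `x ∈ N` with `x ≤ n.y`. -/
def IsLargeSubalg (u : G) (N : Set G) : Prop :=
  IsSubalg u N ∧ ∀ y ∈ Set.Icc (0 : G) u, y ≠ 0 →
    ∃ n : ℕ, ∃ x ∈ N, x ≠ 0 ∧ x ≤ nOplus u n y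

/-!
An element `e ∈ Γ(G,u)` is Boolean exactly when `e ⊓ (-e + u) = 0`. Then `e` and `u - e` are
disjoint, hence commute and add up to `u`, and `e ⊕ x = x ⊕ e = e ⊔ x` for every `x`. Consequently
`x ⊕ ↓e` and `↓e ⊕ x` are both the interval `[x, e ⊔ x]`, so `↓e` is a normal ideal, complemented
by `↓(u - e)`, and joins and meets of Boolean elements correspond to those of their ideals.
Conversely, if `M = I ⊞ J` then `I ⊕ J` is a normal ideal containing `I ∪ J`, so `u = i ⊕ j` with
`i ∈ I`, `j ∈ J`; since `i ⊓ j ∈ I ∩ J = {0}` this forces `i + j = u`, making `i` Boolean and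
`I = ↓i`.
-/

lemma sup_eq_add_neg_inf_add (x y : G) : x ⊔ y = x + -(x ⊓ y) + y := by
  rw [neg_inf, add_sup, add_neg_cancel, sup_add, zero_add, neg_add_cancel_right, sup_comm]

lemma add_eq_sup_of_inf_eq_zero {x y : G} (h : x ⊓ y = 0) : x + y = x ⊔ y := by
  rw [sup_eq_add_neg_inf_add, h, neg_zero, add_zero]

lemma inf_eq_zero_of_le_right {α : Type*} [Lattice α] [Zero α] {x y z : α} (hx : 0 ≤ x)
    (hz : 0 ≤ z) (hzy : z ≤ y) (h : x ⊓ y = 0) : x ⊓ z = 0 :=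
  le_antisymm (h ▸ inf_le_inf_left x hzy) (le_inf hx hz)

section

variable {α : Type*} [Lattice α] [AddGroup α]

lemma oplus_assoc [AddLeftMono α] [AddRightMono α] {u x y z : α} (hx : 0 ≤ x) (hz : 0 ≤ z) :
    oplus u (oplus u x y) z = oplus u x (oplus u y z) := by
  unfold oplus
  rw [inf_add, inf_assoc, inf_eq_right.mpr (le_add_of_nonneg_right hz), add_inf, inf_assoc,
    inf_eq_right.mpr (le_add_of_nonneg_left hx), add_assoc]

lemma oplus_mem_Icc [AddLeftMono α] {u x y : α} (hx : x ∈ Set.Icc 0 u) (hy : y ∈ Set.Icc 0 u) :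
    oplus u x y ∈ Set.Icc 0 u :=
  ⟨le_inf (add_nonneg hx.1 hy.1) (hx.1.trans hx.2), inf_le_right⟩

lemma oplus_eq_add_inf [AddLeftMono α] (u x y : α) :
    oplus u x y = x + y ⊓ (-x + u) := by
  rw [oplus, add_inf, add_neg_cancel_left]

lemma oplus_eq_inf_add [AddRightMono α] (u x y : α) :
    oplus u x y = x ⊓ (u - y) + y := by
  rw [oplus, inf_add, sub_add_cancel]

lemma isBooleanIn_iff_inf_neg_add_eq_zero [AddLeftMono α] {u x : α} (hx : x ∈ Set.Icc 0 u) :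
    IsBooleanIn u (Set.Icc 0 u) x ↔ x ⊓ (-x + u) = 0 := by
  rw [IsBooleanIn, oplus_eq_add_inf, add_eq_left]
  exact and_iff_right hx

lemma IsBooleanIn.inf_neg_add_eq_zero [AddLeftMono α] {u e : α}
    (he : IsBooleanIn u (Set.Icc 0 u) e) : e ⊓ (-e + u) = 0 :=
  (isBooleanIn_iff_inf_neg_add_eq_zero he.1).mp he

lemma IsBooleanIn.inf_sub_eq_zero [AddRightMono α] {u e : α}
    (he : IsBooleanIn u (Set.Icc 0 u) e) : e ⊓ (u - e) = 0 := by
  have h := he.2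
  rwa [oplus_eq_inf_add, add_eq_right] at h

end

section

variable {u e f x : G}

lemma IsBooleanIn.add_sub_eq (he : IsBooleanIn u (Set.Icc 0 u) e) : e + (u - e) = u := by
  rw [add_eq_sup_of_inf_eq_zero he.inf_sub_eq_zero, sup_comm,
    ← add_eq_sup_of_inf_eq_zero (inf_comm e _ ▸ he.inf_sub_eq_zero), sub_add_cancel]

lemma IsBooleanIn.neg_add_eq_sub (he : IsBooleanIn u (Set.Icc 0 u) e) : -e + u = u - e :=
  (eq_neg_add_iff_add_eq.mpr he.add_sub_eq).symm

lemma IsBooleanIn.oplus_eq_sup (he : IsBooleanIn u (Set.Icc 0 u) e) (hx : x ∈ Set.Icc 0 u) :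
    oplus u e x = e ⊔ x := by
  have hcompl : 0 ≤ -e + u := by rw [he.neg_add_eq_sub]; exact sub_nonneg.mpr he.1.2
  have hdisj : e ⊓ (x ⊓ (-e + u)) = 0 :=
    inf_eq_zero_of_le_right he.1.1 (le_inf hx.1 hcompl) inf_le_right he.inf_neg_add_eq_zero
  refine le_antisymm ?_ (le_inf (sup_le (le_add_of_nonneg_right hx.1)
    (le_add_of_nonneg_left he.1.1)) (sup_le he.1.2 hx.2))
  rw [oplus_eq_add_inf, add_eq_sup_of_inf_eq_zero hdisj]
  exact sup_le_sup_left inf_le_left e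

lemma IsBooleanIn.oplus_eq_sup_right (he : IsBooleanIn u (Set.Icc 0 u) e)
    (hx : x ∈ Set.Icc 0 u) : oplus u x e = e ⊔ x := by
  have hdisj : x ⊓ (u - e) ⊓ e = 0 := by
    rw [inf_comm]
    exact inf_eq_zero_of_le_right he.1.1 (le_inf hx.1 (sub_nonneg.mpr he.1.2)) inf_le_right
      he.inf_sub_eq_zero
  refine le_antisymm ?_ (le_inf (sup_le (le_add_of_nonneg_left hx.1)
    (le_add_of_nonneg_right he.1.1)) (sup_le he.1.2 hx.2))
  rw [oplus_eq_inf_add, add_eq_sup_of_inf_eq_zero hdisj, sup_comm]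
  exact sup_le_sup_left inf_le_left e

lemma IsBooleanIn.sup (he : IsBooleanIn u (Set.Icc 0 u) e) (hf : IsBooleanIn u (Set.Icc 0 u) f) :
    IsBooleanIn u (Set.Icc 0 u) (e ⊔ f) := by
  have hmem : e ⊔ f ∈ Set.Icc 0 u := ⟨he.1.1.trans le_sup_left, sup_le he.1.2 hf.1.2⟩
  refine ⟨hmem, ?_⟩
  calc oplus u (e ⊔ f) (e ⊔ f) = oplus u (oplus u e f) (e ⊔ f) := by rw [he.oplus_eq_sup hf.1]
    _ = oplus u e (oplus u f (e ⊔ f)) := oplus_assoc he.1.1 hmem.1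
    _ = e ⊔ f := by
      rw [hf.oplus_eq_sup hmem, sup_eq_right.mpr le_sup_right, he.oplus_eq_sup hmem,
        sup_eq_right.mpr le_sup_left]

lemma IsBooleanIn.inf (he : IsBooleanIn u (Set.Icc 0 u) e) (hf : IsBooleanIn u (Set.Icc 0 u) f) :
    IsBooleanIn u (Set.Icc 0 u) (e ⊓ f) := by
  have hmem : e ⊓ f ∈ Set.Icc 0 u := ⟨le_inf he.1.1 hf.1.1, inf_le_left.trans he.1.2⟩
  refine ⟨hmem, le_antisymm (le_inf ?_ ?_) (le_inf (le_add_of_nonneg_left hmem.1) hmem.2)⟩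
  · calc oplus u (e ⊓ f) (e ⊓ f) ≤ oplus u e e := by unfold oplus; gcongr <;> exact inf_le_left
      _ = e := he.2
  · calc oplus u (e ⊓ f) (e ⊓ f) ≤ oplus u f f := by unfold oplus; gcongr <;> exact inf_le_right
      _ = f := hf.2

lemma IsBooleanIn.sub (he : IsBooleanIn u (Set.Icc 0 u) e) :
    IsBooleanIn u (Set.Icc 0 u) (u - e) := by
  rw [isBooleanIn_iff_inf_neg_add_eq_zero ⟨sub_nonneg.mpr he.1.2, sub_le_self u he.1.1⟩, neg_sub,
    sub_add_cancel, inf_comm, he.inf_sub_eq_zero]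

lemma IsBooleanIn.odot_eq_inf (he : IsBooleanIn u (Set.Icc 0 u) e) (hx : x ∈ Set.Icc 0 u) :
    odot u e x = e ⊓ x := by
  refine le_antisymm (sup_le (le_inf ?_ ?_) (le_inf he.1.1 hx.1)) ?_
  · calc e - u + x ≤ e - u + u := by gcongr; exact hx.2
      _ = e := sub_add_cancel e u
  · exact add_le_of_nonpos_left (sub_nonpos.mpr he.1.2)
  · have hdisj : (u - e) ⊓ (e ⊓ x) = 0 :=
      inf_eq_zero_of_le_right (sub_nonneg.mpr he.1.2) (le_inf he.1.1 hx.1) inf_le_left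
        (inf_comm e _ ▸ he.inf_sub_eq_zero)
    have hshift : (-(u - e) + x) ⊔ 0 = -(u - e) + (x ⊔ (u - e)) := by
      rw [add_sup, neg_add_cancel]
    rw [odot, ← neg_sub, hshift, le_neg_add_iff_add_le, add_eq_sup_of_inf_eq_zero hdisj, sup_comm]
    exact sup_le_sup_right inf_le_right _

end

lemma dsetIn_subset_dsetIn_iff {α : Type*} [Lattice α] {C : Set α} {c d : α} (hc : c ∈ C) :
    dsetIn C c ⊆ dsetIn C d ↔ c ≤ d :=
  ⟨fun h => (h ⟨hc, le_rfl⟩).2, fun hcd _ hx => ⟨hx.1, hx.2.trans hcd⟩⟩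

lemma dsetIn_inter_dsetIn {α : Type*} [Lattice α] (C : Set α) (c d : α) :
    dsetIn C c ∩ dsetIn C d = dsetIn C (c ⊓ d) := by
  ext x
  simp only [dsetIn, Set.mem_inter_iff, Set.mem_sep_iff, le_inf_iff]
  tauto

section

variable {u e : G}

lemma IsBooleanIn.isIdealIn_dsetIn (he : IsBooleanIn u (Set.Icc 0 u) e) :
    IsIdealIn u (Set.Icc 0 u) (dsetIn (Set.Icc 0 u) e) := by
  refine ⟨fun _ hx => hx.1, ⟨e, he.1, le_rfl⟩, fun _ hx _ hy hyx => ⟨hy, hyx.trans hx.2⟩,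
    fun x hx y hy => ⟨oplus_mem_Icc hx.1 hy.1, ?_⟩⟩
  calc oplus u x y ≤ oplus u e e := by unfold oplus; gcongr; exacts [hx.2, hy.2]
    _ = e := he.2

lemma IsBooleanIn.image_oplus_left_dsetIn (he : IsBooleanIn u (Set.Icc 0 u) e) {x : G}
    (hx : x ∈ Set.Icc 0 u) :
    (fun i => oplus u x i) '' dsetIn (Set.Icc 0 u) e = Set.Icc x (e ⊔ x) := by
  ext y
  constructor
  · rintro ⟨i, ⟨hi, hie⟩, rfl⟩
    refine ⟨le_inf (le_add_of_nonneg_right hi.1) hx.2, ?_⟩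
    calc oplus u x i ≤ oplus u x e := by unfold oplus; gcongr
      _ = e ⊔ x := he.oplus_eq_sup_right hx
  · rintro ⟨hxy, hye⟩
    have hyu : y ≤ u := hye.trans (sup_le he.1.2 hx.2)
    have hje : -x + y ≤ e :=
      calc -x + y ≤ -x + (e ⊔ x) := by gcongr
        _ = (-x + e) ⊔ 0 := by rw [add_sup, neg_add_cancel]
        _ ≤ e := sup_le (neg_add_le_iff_le_add.mpr (le_add_of_nonneg_left hx.1)) he.1.1
    refine ⟨-x + y, ⟨⟨le_neg_add_iff_add_le.mpr (by rwa [add_zero]), hje.trans he.1.2⟩, hje⟩, ?_⟩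
    simp only [oplus, add_neg_cancel_left, inf_eq_left.mpr hyu]

lemma IsBooleanIn.image_oplus_right_dsetIn (he : IsBooleanIn u (Set.Icc 0 u) e) {x : G}
    (hx : x ∈ Set.Icc 0 u) :
    (fun i => oplus u i x) '' dsetIn (Set.Icc 0 u) e = Set.Icc x (e ⊔ x) := by
  ext y
  constructor
  · rintro ⟨i, ⟨hi, hie⟩, rfl⟩
    refine ⟨le_inf (le_add_of_nonneg_left hi.1) hx.2, ?_⟩
    calc oplus u i x ≤ oplus u e x := by unfold oplus; gcongr
      _ = e ⊔ x := he.oplus_eq_sup hx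
  · rintro ⟨hxy, hye⟩
    have hyu : y ≤ u := hye.trans (sup_le he.1.2 hx.2)
    have hje : y - x ≤ e :=
      calc y - x ≤ (e ⊔ x) - x := by gcongr
        _ = (e - x) ⊔ 0 := by rw [sub_eq_add_neg, sup_add, add_neg_cancel, ← sub_eq_add_neg]
        _ ≤ e := sup_le (sub_le_self e hx.1) he.1.1
    refine ⟨y - x, ⟨⟨sub_nonneg.mpr hxy, hje.trans he.1.2⟩, hje⟩, ?_⟩
    simp only [oplus, sub_add_cancel, inf_eq_left.mpr hyu]

lemma IsBooleanIn.isNormalIdealIn_dsetIn (he : IsBooleanIn u (Set.Icc 0 u) e) :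
    IsNormalIdealIn u (Set.Icc 0 u) (dsetIn (Set.Icc 0 u) e) :=
  ⟨he.isIdealIn_dsetIn, fun _ hx => by
    rw [he.image_oplus_left_dsetIn hx, he.image_oplus_right_dsetIn hx]⟩

lemma IsBooleanIn.normalGenIn_dsetIn_union {f : G} (he : IsBooleanIn u (Set.Icc 0 u) e)
    (hf : IsBooleanIn u (Set.Icc 0 u) f) :
    normalGenIn u (Set.Icc 0 u) (dsetIn (Set.Icc 0 u) e ∪ dsetIn (Set.Icc 0 u) f) =
      dsetIn (Set.Icc 0 u) (e ⊔ f) := by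
  refine Set.Subset.antisymm
    (Set.sInter_subset_of_mem ⟨(he.sup hf).isNormalIdealIn_dsetIn, ?_⟩) ?_
  · exact Set.union_subset ((dsetIn_subset_dsetIn_iff he.1).mpr le_sup_left)
      ((dsetIn_subset_dsetIn_iff hf.1).mpr le_sup_right)
  · rintro z hz K ⟨hK, hsub⟩
    have hef : oplus u e f ∈ K :=
      hK.1.2.2.2 e (hsub (Or.inl ⟨he.1, le_rfl⟩)) f (hsub (Or.inr ⟨hf.1, le_rfl⟩))
    rw [he.oplus_eq_sup hf.1] at hef
    exact hK.1.2.2.1 _ hef z hz.1 hz.2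

lemma IsBooleanIn.isSummandIdealIn_dsetIn (he : IsBooleanIn u (Set.Icc 0 u) e) :
    IsSummandIdealIn u (Set.Icc 0 u) (dsetIn (Set.Icc 0 u) e) := by
  refine ⟨he.isNormalIdealIn_dsetIn, dsetIn (Set.Icc 0 u) (u - e), he.sub.isNormalIdealIn_dsetIn,
    ?_, ?_⟩
  · rw [dsetIn_inter_dsetIn, he.inf_sub_eq_zero, Set.eq_singleton_iff_unique_mem]
    exact ⟨⟨⟨le_rfl, he.1.1.trans he.1.2⟩, le_rfl⟩, fun x hx => le_antisymm hx.2 hx.1.1⟩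
  · rw [he.normalGenIn_dsetIn_union he.sub, ← add_eq_sup_of_inf_eq_zero he.inf_sub_eq_zero,
      he.add_sub_eq]
    exact Set.sep_eq_self_iff_mem_true.mpr fun x hx => hx.2

end

section

variable {α : Type*} [Lattice α] [AddGroup α] {u : α} {I J : Set α}

lemma IsIdealIn.zero_mem (hI : IsIdealIn u (Set.Icc 0 u) I) : 0 ∈ I := by
  obtain ⟨w, hw⟩ := hI.2.1
  exact hI.2.2.1 w hw 0 ⟨le_rfl, (hI.1 hw).1.trans (hI.1 hw).2⟩ (hI.1 hw).1

lemma IsNormalIdealIn.exists_oplus_comm {C : Set α} (hI : IsNormalIdealIn u C I) {x i : α}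
    (hx : x ∈ C) (hi : i ∈ I) : ∃ i' ∈ I, oplus u i' x = oplus u x i :=
  (hI.2 x hx).subset ⟨i, hi, rfl⟩

lemma IsNormalIdealIn.exists_oplus_comm' {C : Set α} (hI : IsNormalIdealIn u C I) {x i : α}
    (hx : x ∈ C) (hi : i ∈ I) : ∃ i' ∈ I, oplus u x i' = oplus u i x :=
  (hI.2 x hx).superset ⟨i, hi, rfl⟩

lemma union_subset_setOplus (hI : IsIdealIn u (Set.Icc 0 u) I)
    (hJ : IsIdealIn u (Set.Icc 0 u) J) : I ∪ J ⊆ setOplus u I J := by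
  rintro z (hz | hz)
  · exact ⟨z, hz, 0, hJ.zero_mem, by rw [oplus, add_zero, inf_eq_left.mpr (hI.1 hz).2]⟩
  · exact ⟨0, hI.zero_mem, z, hz, by rw [oplus, zero_add, inf_eq_left.mpr (hJ.1 hz).2]⟩

lemma mem_setOplus_of_le_oplus [AddLeftMono α] [AddRightMono α] (hI : IsIdealIn u (Set.Icc 0 u) I)
    (hJ : IsIdealIn u (Set.Icc 0 u) J) {i j z : α} (hi : i ∈ I) (hj : j ∈ J)
    (hz : z ∈ Set.Icc 0 u) (hzij : z ≤ oplus u i j) : z ∈ setOplus u I J := by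
  -- split `z` as `(z ⊓ i) + (-(z ⊓ i) + z)`, with the second summand below `j`
  have hj' : -(z ⊓ i) + z ≤ j := by
    rw [neg_inf, sup_add, neg_add_cancel]
    exact sup_le (hJ.1 hj).1 (neg_add_le_iff_le_add.mpr (hzij.trans inf_le_left))
  have hj'0 : 0 ≤ -(z ⊓ i) + z := le_neg_add_iff_add_le.mpr (by rw [add_zero]; exact inf_le_left)
  refine ⟨z ⊓ i, hI.2.2.1 i hi _ ⟨le_inf hz.1 (hI.1 hi).1, inf_le_left.trans hz.2⟩ inf_le_right,
    -(z ⊓ i) + z, hJ.2.2.1 j hj _ ⟨hj'0, hj'.trans (hJ.1 hj).2⟩ hj', ?_⟩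
  rw [oplus, add_neg_cancel_left, inf_eq_left.mpr hz.2]

lemma IsNormalIdealIn.oplus_mem_setOplus [AddLeftMono α] [AddRightMono α]
    (hI : IsNormalIdealIn u (Set.Icc 0 u) I)
    (hJ : IsIdealIn u (Set.Icc 0 u) J) {p q : α} (hp : p ∈ setOplus u I J)
    (hq : q ∈ setOplus u I J) : oplus u p q ∈ setOplus u I J := by
  obtain ⟨i, hi, j, hj, rfl⟩ := hp
  obtain ⟨i', hi', j', hj', rfl⟩ := hq
  obtain ⟨i₂, hi₂, hswap⟩ := hI.exists_oplus_comm (hJ.1 hj) hi'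
  have h0 : ∀ x ∈ I ∪ J, 0 ≤ x := fun x hx => (hx.elim (hI.1.1 ·) (hJ.1 ·)).1
  refine ⟨oplus u i i₂, hI.1.2.2.2 i hi i₂ hi₂, oplus u j j', hJ.2.2.2 j hj j' hj', ?_⟩
  calc oplus u (oplus u i i₂) (oplus u j j')
      = oplus u i (oplus u (oplus u i₂ j) j') := by
        rw [oplus_assoc (h0 i (.inl hi)) (oplus_mem_Icc (hJ.1 hj) (hJ.1 hj')).1,
          oplus_assoc (h0 i₂ (.inl hi₂)) (h0 j' (.inr hj'))]
    _ = oplus u (oplus u i j) (oplus u i' j') := by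
        rw [hswap, oplus_assoc (h0 j (.inr hj)) (h0 j' (.inr hj')),
          oplus_assoc (h0 i (.inl hi)) (oplus_mem_Icc (hI.1.1 hi') (hJ.1 hj')).1]

lemma IsNormalIdealIn.isNormalIdealIn_setOplus [AddLeftMono α] [AddRightMono α]
    (hI : IsNormalIdealIn u (Set.Icc 0 u) I)
    (hJ : IsNormalIdealIn u (Set.Icc 0 u) J) :
    IsNormalIdealIn u (Set.Icc 0 u) (setOplus u I J) := by
  have hIJ : I ∪ J ⊆ setOplus u I J := union_subset_setOplus hI.1 hJ.1
  have hmem : ∀ x ∈ I ∪ J, x ∈ Set.Icc 0 u := fun x hx => hx.elim (hI.1.1 ·) (hJ.1.1 ·)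
  refine ⟨⟨?_, ⟨0, hIJ (.inl hI.1.zero_mem)⟩, ?_,
    fun p hp q hq => hI.oplus_mem_setOplus hJ.1 hp hq⟩, fun x hx => Set.Subset.antisymm ?_ ?_⟩
  · rintro _ ⟨i, hi, j, hj, rfl⟩
    exact oplus_mem_Icc (hmem i (.inl hi)) (hmem j (.inr hj))
  · rintro _ ⟨i, hi, j, hj, rfl⟩ z hz hzij
    exact mem_setOplus_of_le_oplus hI.1 hJ.1 hi hj hz hzij
  · rintro _ ⟨_, ⟨i, hi, j, hj, rfl⟩, rfl⟩
    obtain ⟨i₂, hi₂, hswapI⟩ := hI.exists_oplus_comm hx hi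
    obtain ⟨j₂, hj₂, hswapJ⟩ := hJ.exists_oplus_comm hx hj
    refine ⟨oplus u i₂ j₂, ⟨i₂, hi₂, j₂, hj₂, rfl⟩, ?_⟩
    change oplus u (oplus u i₂ j₂) x = oplus u x (oplus u i j)
    rw [oplus_assoc (hmem i₂ (.inl hi₂)).1 hx.1, hswapJ,
      ← oplus_assoc (hmem i₂ (.inl hi₂)).1 (hmem j (.inr hj)).1, hswapI,
      oplus_assoc hx.1 (hmem j (.inr hj)).1]
  · rintro _ ⟨_, ⟨i, hi, j, hj, rfl⟩, rfl⟩
    obtain ⟨i₂, hi₂, hswapI⟩ := hI.exists_oplus_comm' hx hi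
    obtain ⟨j₂, hj₂, hswapJ⟩ := hJ.exists_oplus_comm' hx hj
    refine ⟨oplus u i₂ j₂, ⟨i₂, hi₂, j₂, hj₂, rfl⟩, ?_⟩
    change oplus u x (oplus u i₂ j₂) = oplus u (oplus u i j) x
    rw [← oplus_assoc hx.1 (hmem j₂ (.inr hj₂)).1, hswapI,
      oplus_assoc (hmem i (.inl hi)).1 (hmem j₂ (.inr hj₂)).1, hswapJ,
      oplus_assoc (hmem i (.inl hi)).1 hx.1]

lemma inf_eq_zero_of_inter_eq_singleton_zero (hI : IsIdealIn u (Set.Icc 0 u) I)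
    (hJ : IsIdealIn u (Set.Icc 0 u) J) (hIJ : I ∩ J = {0}) {i j : α} (hi : i ∈ I) (hj : j ∈ J) :
    i ⊓ j = 0 := by
  have hmem : i ⊓ j ∈ Set.Icc 0 u :=
    ⟨le_inf (hI.1 hi).1 (hJ.1 hj).1, inf_le_left.trans (hI.1 hi).2⟩
  have : i ⊓ j ∈ I ∩ J := ⟨hI.2.2.1 i hi _ hmem inf_le_left, hJ.2.2.1 j hj _ hmem inf_le_right⟩
  rwa [hIJ, Set.mem_singleton_iff] at this

end

lemma IsSummandIdealIn.exists_isBooleanIn_dsetIn_eq {u : G} {I : Set G}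
    (hI : IsSummandIdealIn u (Set.Icc 0 u) I) :
    ∃ c, IsBooleanIn u (Set.Icc 0 u) c ∧ dsetIn (Set.Icc 0 u) c = I := by
  obtain ⟨hInormal, J, hJnormal, hIJ, hgen⟩ := hI
  have hdisj : ∀ {x y}, x ∈ I → y ∈ J → x ⊓ y = 0 :=
    inf_eq_zero_of_inter_eq_singleton_zero hInormal.1 hJnormal.1 hIJ
  have hu : u ∈ setOplus u I J := by
    obtain ⟨w, hw⟩ := hInormal.1.2.1
    have hC : Set.Icc 0 u ⊆ setOplus u I J := hgen ▸ Set.sInter_subset_of_mem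
      ⟨hInormal.isNormalIdealIn_setOplus hJnormal, union_subset_setOplus hInormal.1 hJnormal.1⟩
    exact hC ⟨(hInormal.1.1 hw).1.trans (hInormal.1.1 hw).2, le_rfl⟩
  obtain ⟨i, hi, j, hj, hij⟩ := hu
  have hiC := hInormal.1.1 hi
  have hju : j ≤ u := (hJnormal.1.1 hj).2
  have hsum : i + j = u :=
    le_antisymm ((add_eq_sup_of_inf_eq_zero (hdisj hi hj)).trans_le (sup_le hiC.2 hju))
      (hij.symm.trans_le inf_le_left)
  have hcompl : -i + u = j := by rw [← hsum, neg_add_cancel_left]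
  refine ⟨i, (isBooleanIn_iff_inf_neg_add_eq_zero hiC).mpr (hcompl ▸ hdisj hi hj),
    Set.Subset.antisymm (fun x hx => hInormal.1.2.2.1 i hi x hx.1 hx.2)
      fun x hx => ⟨hInormal.1.1 hx, ?_⟩⟩
  have hxj : x + j ≤ u := by
    rw [add_eq_sup_of_inf_eq_zero (hdisj hx hj)]
    exact sup_le (hInormal.1.1 hx).2 hju
  exact le_of_add_le_add_right (hxj.trans_eq hsum.symm)

theorem stmt10_general (u : G) (a b : G)
    (ha : IsBooleanIn u (Set.Icc (0 : G) u) a) (hb : IsBooleanIn u (Set.Icc (0 : G) u) b) :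
    normalGenIn u (Set.Icc (0 : G) u) (dsetIn (Set.Icc (0 : G) u) a ∪ dsetIn (Set.Icc (0 : G) u) b)
        = dsetIn (Set.Icc (0 : G) u) (oplus u a b) ∧
      dsetIn (Set.Icc (0 : G) u) a ∩ dsetIn (Set.Icc (0 : G) u) b = dsetIn (Set.Icc (0 : G) u) (odot u a b) ∧
      IsSummandIdealIn u (Set.Icc (0 : G) u)
        (normalGenIn u (Set.Icc (0 : G) u) (dsetIn (Set.Icc (0 : G) u) a ∪ dsetIn (Set.Icc (0 : G) u) b)) ∧
      IsSummandIdealIn u (Set.Icc (0 : G) u) (dsetIn (Set.Icc (0 : G) u) a ∩ dsetIn (Set.Icc (0 : G) u) b) ∧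
      Set.BijOn (dsetIn (Set.Icc (0 : G) u)) {c : G | IsBooleanIn u (Set.Icc (0 : G) u) c}
        {I : Set G | IsSummandIdealIn u (Set.Icc (0 : G) u) I} ∧
      (∀ c d : G, IsBooleanIn u (Set.Icc (0 : G) u) c → IsBooleanIn u (Set.Icc (0 : G) u) d →
        (c ≤ d ↔ dsetIn (Set.Icc (0 : G) u) c ⊆ dsetIn (Set.Icc (0 : G) u) d)) := by
  have hsup := ha.normalGenIn_dsetIn_union hb
  have hinf := dsetIn_inter_dsetIn (Set.Icc 0 u) a b
  refine ⟨by rw [hsup, ha.oplus_eq_sup hb.1], by rw [hinf, ha.odot_eq_inf hb.1], ?_, ?_,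
    ⟨fun c hc => hc.isSummandIdealIn_dsetIn, ?_, fun I hI => hI.exists_isBooleanIn_dsetIn_eq⟩,
    fun c d hc _ => (dsetIn_subset_dsetIn_iff hc.1).symm⟩
  · exact hsup ▸ (ha.sup hb).isSummandIdealIn_dsetIn
  · exact hinf ▸ (ha.inf hb).isSummandIdealIn_dsetIn
  · intro c hc d hd hcd
    exact le_antisymm ((dsetIn_subset_dsetIn_iff hc.1).mp hcd.le)
      ((dsetIn_subset_dsetIn_iff hd.1).mp hcd.ge)

theorem stmt10 (u : G) (hu : IsStrongUnit u) (a b : G)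
    (ha : IsBooleanIn u (Set.Icc (0 : G) u) a) (hb : IsBooleanIn u (Set.Icc (0 : G) u) b)
    (hA : IsSummandIdealIn u (Set.Icc (0 : G) u) (dsetIn (Set.Icc (0 : G) u) a))
    (hB : IsSummandIdealIn u (Set.Icc (0 : G) u) (dsetIn (Set.Icc (0 : G) u) b)) :
    normalGenIn u (Set.Icc (0 : G) u) (dsetIn (Set.Icc (0 : G) u) a ∪ dsetIn (Set.Icc (0 : G) u) b)
        = dsetIn (Set.Icc (0 : G) u) (oplus u a b) ∧
      dsetIn (Set.Icc (0 : G) u) a ∩ dsetIn (Set.Icc (0 : G) u) b = dsetIn (Set.Icc (0 : G) u) (odot u a b) ∧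
      IsSummandIdealIn u (Set.Icc (0 : G) u)
        (normalGenIn u (Set.Icc (0 : G) u) (dsetIn (Set.Icc (0 : G) u) a ∪ dsetIn (Set.Icc (0 : G) u) b)) ∧
      IsSummandIdealIn u (Set.Icc (0 : G) u) (dsetIn (Set.Icc (0 : G) u) a ∩ dsetIn (Set.Icc (0 : G) u) b) ∧
      Set.BijOn (dsetIn (Set.Icc (0 : G) u)) {c : G | IsBooleanIn u (Set.Icc (0 : G) u) c}
        {I : Set G | IsSummandIdealIn u (Set.Icc (0 : G) u) I} ∧
      (∀ c d : G, IsBooleanIn u (Set.Icc (0 : G) u) c → IsBooleanIn u (Set.Icc (0 : G) u) d →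
        (c ≤ d ↔ dsetIn (Set.Icc (0 : G) u) c ⊆ dsetIn (Set.Icc (0 : G) u) d)) :=
  stmt10_general u a b ha hb
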